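/- Let 1 < α ≤ 2, 0 ≤ β ≤ α - 1, a < b, K > 0 with K(α-1)^(α-1)(b-a)^α/((α-β)^α Γ(α+1)) < 1. Then the operator T on C([a,b]) defined by (Tu)(t) = ∫ₐᵇ G(t,s) f(s,u(s)) ds, where f is continuous and K-Lipschitz in its second variable, is a contraction in the sup norm with contraction constant K(α-1)^(α-1)(b-a)^α/((α-β)^α Γ(α+1)). -/

import Mathlib

noncomputable def G (a b α β t s : ℝ) : ℝ :=
  if s ≤ t then
    (1 / Real.Gamma α) *
      ((t - a) ^ (α - 1) * (b - s) ^ (α - 1 - β) / (b - a) ^ (α - 1 - β) -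
        (t - s) ^ (α - 1))
  else
    (1 / Real.Gamma α) *
      ((t - a) ^ (α - 1) * (b - s) ^ (α - 1 - β) / (b - a) ^ (α - 1 - β))

/-!
Since `G ≥ 0`, the difference of the two integrals is bounded by `K ‖u - v‖ ∫ₐᵇ G(t,s) ds`.
Splitting `G` into `(b - s)^(α-1-β)` and the truncated power `(t - s)₊^(α-1)` gives
`Γ(α) ∫ₐᵇ G(t,s) ds = x^(α-1) (b-a)/(α-β) - x^α/α` with `x = t - a`, and weighted AM–GM bounds
this uniformly in `x ≥ 0` by its value `(α-1)^(α-1) (b-a)^α / ((α-β)^α α)` at the maximiser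
`x = (α-1)(b-a)/(α-β)`.
-/

open MeasureTheory intervalIntegral Set

section PowerIntegrals

variable {a b t r : ℝ}

theorem intervalIntegrable_sub_rpow (hr : -1 < r) :
    IntervalIntegrable (fun s => (b - s) ^ r) volume a b := by
  simpa using (intervalIntegrable_rpow' (a := b - a) (b := 0) hr).comp_sub_left b

theorem integral_sub_rpow (hr : -1 < r) :
    ∫ s in a..b, (b - s) ^ r = (b - a) ^ (r + 1) / (r + 1) := by
  rw [integral_comp_sub_left (fun x => x ^ r), sub_self, integral_rpow (Or.inl hr),
    Real.zero_rpow (by linarith), sub_zero]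

theorem eqOn_ite_rpow_left (hat : a ≤ t) :
    EqOn (fun s => if s ≤ t then (t - s) ^ r else 0) (fun s => (t - s) ^ r) (uIoc a t) :=
  fun _ hs => if_pos (uIoc_of_le hat ▸ hs).2

theorem eqOn_ite_rpow_right (htb : t ≤ b) :
    EqOn (fun s => if s ≤ t then (t - s) ^ r else 0) 0 (uIoc t b) :=
  fun _ hs => if_neg (not_le.mpr (uIoc_of_le htb ▸ hs).1)

theorem intervalIntegrable_ite_rpow (hr : -1 < r) (ht : t ∈ Icc a b) :
    IntervalIntegrable (fun s => if s ≤ t then (t - s) ^ r else 0) volume a b :=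
  ((intervalIntegrable_sub_rpow hr).congr (eqOn_ite_rpow_left ht.1).symm).trans
    (IntervalIntegrable.zero.congr (eqOn_ite_rpow_right ht.2).symm)

theorem integral_ite_rpow (hr : -1 < r) (ht : t ∈ Icc a b) :
    ∫ s in a..b, (if s ≤ t then (t - s) ^ r else 0) = (t - a) ^ (r + 1) / (r + 1) := by
  have hint := intervalIntegrable_ite_rpow hr ht
  have htab := Icc_subset_uIcc ht
  rw [← integral_add_adjacent_intervals (hint.mono_set (uIcc_subset_uIcc_left htab))
      (hint.mono_set (uIcc_subset_uIcc_right htab)),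
    integral_congr_ae (Filter.Eventually.of_forall (eqOn_ite_rpow_left ht.1)),
    integral_congr_ae (Filter.Eventually.of_forall (eqOn_ite_rpow_right ht.2)),
    integral_sub_rpow hr, Pi.zero_def, intervalIntegral.integral_zero, add_zero]

end PowerIntegrals

/-- Weighted AM–GM with weights `(α-1)/α` and `1/α`; equality holds at `x = (α - 1) c`. -/
theorem rpow_sub_one_mul_le {α x c : ℝ} (hα : 1 < α) (hx : 0 ≤ x) (hc : 0 ≤ c) :
    x ^ (α - 1) * c ≤ x ^ α / α + (α - 1) ^ (α - 1) * c ^ α / α := by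
  have hα₀ : α ≠ 0 := by positivity
  have hα₁ : 0 < α - 1 := sub_pos.2 hα
  have hamgm := Real.geom_mean_le_arith_mean2_weighted (w₁ := (α - 1) / α) (w₂ := 1 / α)
    (p₁ := x ^ α / (α - 1)) (p₂ := (α - 1) ^ (α - 1) * c ^ α) (by positivity) (by positivity)
    (by positivity) (by positivity) (by field_simp; ring)
  have hp₁ : (x ^ α / (α - 1)) ^ ((α - 1) / α) = x ^ (α - 1) / (α - 1) ^ ((α - 1) / α) := by
    rw [Real.div_rpow (by positivity) hα₁.le, ← Real.rpow_mul hx, mul_div_cancel₀ _ hα₀]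
  have hp₂ : ((α - 1) ^ (α - 1) * c ^ α) ^ (1 / α) = (α - 1) ^ ((α - 1) / α) * c := by
    rw [Real.mul_rpow (by positivity) (by positivity), ← Real.rpow_mul hα₁.le,
      ← Real.rpow_mul hc, mul_one_div_cancel hα₀, Real.rpow_one, mul_one_div]
  have hpos : 0 < (α - 1) ^ ((α - 1) / α) := by positivity
  rw [hp₁, hp₂, div_mul_eq_mul_div, mul_left_comm, mul_div_cancel_left₀ _ hpos.ne'] at hamgm
  convert hamgm using 1
  field_simp

section Green

variable {a b α β t s : ℝ}

theorem G_eq (a b α β t s : ℝ) :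
    G a b α β t s = 1 / Real.Gamma α * ((t - a) ^ (α - 1) / (b - a) ^ (α - 1 - β) *
      (b - s) ^ (α - 1 - β) - if s ≤ t then (t - s) ^ (α - 1) else 0) := by
  unfold G
  split_ifs <;> ring

theorem intervalIntegrable_G (hα : 0 < α) (hβα : β < α) (ht : t ∈ Icc a b) :
    IntervalIntegrable (G a b α β t) volume a b := by
  rw [funext (G_eq a b α β t)]
  exact (((intervalIntegrable_sub_rpow (by linarith)).const_mul _).sub
    (intervalIntegrable_ite_rpow (by linarith) ht)).const_mul _

theorem integral_G (hα : 0 < α) (hβα : β < α) (hab : a < b) (ht : t ∈ Icc a b) :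
    ∫ s in a..b, G a b α β t s =
      1 / Real.Gamma α * ((t - a) ^ (α - 1) * (b - a) / (α - β) - (t - a) ^ α / α) := by
  simp_rw [G_eq a b α β t]
  rw [intervalIntegral.integral_const_mul,
    integral_sub ((intervalIntegrable_sub_rpow (by linarith)).const_mul _)
      (intervalIntegrable_ite_rpow (by linarith) ht), intervalIntegral.integral_const_mul,
    integral_sub_rpow (by linarith), integral_ite_rpow (by linarith) ht,
    show α - 1 - β + 1 = α - β by ring, sub_add_cancel,
    show α - 1 - β = α - β - 1 by ring, Real.rpow_sub (sub_pos.2 hab), Real.rpow_one]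
  have : (b - a) ^ (α - β) ≠ 0 := (Real.rpow_pos_of_pos (sub_pos.2 hab) _).ne'
  field_simp

theorem G_nonneg (hα : 1 < α) (hβ : 0 ≤ β) (hβα : β ≤ α - 1) (hab : a < b)
    (ht : t ∈ Icc a b) (hs : s ∈ Icc a b) : 0 ≤ G a b α β t s := by
  rw [G_eq]
  refine mul_nonneg (by positivity) (sub_nonneg.2 ?_)
  split_ifs with hst
  · set ρ := (b - s) / (b - a)
    have hba : 0 < b - a := sub_pos.2 hab
    have hρ0 : 0 ≤ ρ := div_nonneg (sub_nonneg.2 hs.2) hba.le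
    have hρ1 : ρ ≤ 1 := div_le_one_of_le₀ (by linarith [hs.1]) hba.le
    -- `(t - a)(b - s) - (t - s)(b - a) = (s - a)(b - t)`
    have hlin : t - s ≤ (t - a) * ρ := by
      rw [mul_div_assoc', le_div_iff₀ hba]
      nlinarith [mul_nonneg (sub_nonneg.2 hs.1) (sub_nonneg.2 ht.2)]
    calc (t - s) ^ (α - 1) ≤ ((t - a) * ρ) ^ (α - 1) :=
          Real.rpow_le_rpow (sub_nonneg.2 hst) hlin (by linarith)
      _ = (t - a) ^ (α - 1) * ρ ^ (α - 1) := Real.mul_rpow (sub_nonneg.2 ht.1) hρ0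
      _ ≤ (t - a) ^ (α - 1) * ρ ^ (α - 1 - β) :=
          mul_le_mul_of_nonneg_left
            (Real.rpow_le_rpow_of_exponent_ge' hρ0 hρ1 (by linarith) (by linarith))
            (Real.rpow_nonneg (sub_nonneg.2 ht.1) _)
      _ = _ := by rw [Real.div_rpow (sub_nonneg.2 hs.2) hba.le]; ring
  · exact mul_nonneg (div_nonneg (Real.rpow_nonneg (sub_nonneg.2 ht.1) _)
      (Real.rpow_nonneg (sub_nonneg.2 hab.le) _)) (Real.rpow_nonneg (sub_nonneg.2 hs.2) _)

theorem integral_G_le (hα : 1 < α) (hβα : β < α) (hab : a < b) (ht : t ∈ Icc a b) :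
    ∫ s in a..b, G a b α β t s ≤
      (α - 1) ^ (α - 1) * (b - a) ^ α / ((α - β) ^ α * Real.Gamma (α + 1)) := by
  have hαβ : 0 < α - β := sub_pos.2 hβα
  have hyoung := rpow_sub_one_mul_le hα (sub_nonneg.2 ht.1)
    (div_nonneg (sub_nonneg.2 hab.le) hαβ.le)
  rw [Real.div_rpow (sub_nonneg.2 hab.le) hαβ.le] at hyoung
  rw [integral_G (by linarith) hβα hab ht, Real.Gamma_add_one (by linarith)]
  calc 1 / Real.Gamma α * ((t - a) ^ (α - 1) * (b - a) / (α - β) - (t - a) ^ α / α)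
      ≤ 1 / Real.Gamma α * ((α - 1) ^ (α - 1) * ((b - a) ^ α / (α - β) ^ α) / α) := by
        gcongr
        rw [mul_div_assoc]
        linarith
    _ = _ := by field_simp

end Green

theorem abs_integral_mul_le_integral_mul {g F : ℝ → ℝ} {a b M : ℝ} (hab : a ≤ b)
    (hg : IntervalIntegrable g volume a b) (hg₀ : ∀ s ∈ Icc a b, 0 ≤ g s)
    (hF : ContinuousOn F (Icc a b)) (hFM : ∀ s ∈ Icc a b, |F s| ≤ M) :
    |∫ s in a..b, g s * F s| ≤ (∫ s in a..b, g s) * M := by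
  have hgF : IntervalIntegrable (fun s => g s * F s) volume a b :=
    hg.mul_continuousOn (uIcc_of_le hab ▸ hF)
  calc |∫ s in a..b, g s * F s| ≤ ∫ s in a..b, |g s * F s| := abs_integral_le_integral_abs hab
    _ ≤ ∫ s in a..b, g s * M := by
        refine integral_mono_on hab hgF.abs (hg.mul_const M) fun s hs => ?_
        rw [abs_mul, abs_of_nonneg (hg₀ s hs)]
        exact mul_le_mul_of_nonneg_left (hFM s hs) (hg₀ s hs)
    _ = (∫ s in a..b, g s) * M := integral_mul_const M g

theorem stmt_13_general (α β a b K : ℝ) (hα : 1 < α) (hβ : 0 ≤ β)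
    (hβα : β ≤ α - 1) (hab : a < b) (hK : 0 < K)
    (f : ℝ → ℝ → ℝ)
    (hf : Continuous fun p : ℝ × ℝ => f p.1 p.2)
    (hLip : ∀ t ∈ Set.Icc a b, ∀ u₁ u₂ : ℝ, |f t u₁ - f t u₂| ≤ K * |u₁ - u₂|) :
    ∀ u v : C(Set.Icc a b, ℝ), ∀ t ∈ Set.Icc a b,
      |(∫ s in a..b, G a b α β t s * f s (u (Set.projIcc a b hab.le s))) -
          ∫ s in a..b, G a b α β t s * f s (v (Set.projIcc a b hab.le s))| ≤
        K * (α - 1) ^ (α - 1) * (b - a) ^ α /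
          ((α - β) ^ α * Real.Gamma (α + 1)) * ‖u - v‖ := by
  intro u v t ht
  have hβα' : β < α := by linarith
  have hG := intervalIntegrable_G (by linarith) hβα' ht
  have hcomp : ∀ w : C(Icc a b, ℝ), Continuous fun s => f s (w (projIcc a b hab.le s)) :=
    fun w => hf.comp (continuous_id.prodMk (w.continuous.comp continuous_projIcc))
  have hdiff : ∀ s ∈ Icc a b, |f s (u (projIcc a b hab.le s)) - f s (v (projIcc a b hab.le s))|
      ≤ K * ‖u - v‖ := fun s hs =>
    (hLip s hs _ _).trans
      (mul_le_mul_of_nonneg_left (ContinuousMap.norm_coe_le_norm (u - v) _) hK.le)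
  rw [← integral_sub (hG.mul_continuousOn (hcomp u).continuousOn)
    (hG.mul_continuousOn (hcomp v).continuousOn)]
  simp_rw [← mul_sub]
  calc _ ≤ (∫ s in a..b, G a b α β t s) * (K * ‖u - v‖) :=
        abs_integral_mul_le_integral_mul hab.le hG (fun s hs => G_nonneg hα hβ hβα hab ht hs)
          ((hcomp u).sub (hcomp v)).continuousOn hdiff
    _ ≤ (α - 1) ^ (α - 1) * (b - a) ^ α / ((α - β) ^ α * Real.Gamma (α + 1)) * (K * ‖u - v‖) :=
        mul_le_mul_of_nonneg_right (integral_G_le hα hβα' hab ht) (by positivity)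
    _ = _ := by ring

theorem stmt_13 (α β a b K : ℝ) (hα : 1 < α) (hα2 : α ≤ 2) (hβ : 0 ≤ β)
    (hβα : β ≤ α - 1) (hab : a < b) (hK : 0 < K)
    (hc : K * (α - 1) ^ (α - 1) * (b - a) ^ α /
      ((α - β) ^ α * Real.Gamma (α + 1)) < 1)
    (f : ℝ → ℝ → ℝ)
    (hf : Continuous fun p : ℝ × ℝ => f p.1 p.2)
    (hLip : ∀ t ∈ Set.Icc a b, ∀ u₁ u₂ : ℝ, |f t u₁ - f t u₂| ≤ K * |u₁ - u₂|) :
    ∀ u v : C(Set.Icc a b, ℝ), ∀ t ∈ Set.Icc a b,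
      |(∫ s in a..b, G a b α β t s * f s (u (Set.projIcc a b hab.le s))) -
          ∫ s in a..b, G a b α β t s * f s (v (Set.projIcc a b hab.le s))| ≤
        K * (α - 1) ^ (α - 1) * (b - a) ^ α /
          ((α - β) ^ α * Real.Gamma (α + 1)) * ‖u - v‖ :=
  stmt_13_general α β a b K hα hβ hβα hab hK f hf hLip
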